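/- (Lemma 4, boundedness of the DDPM score weights.) Define η_s := e^{−s}/(1 − e^{−2s}) for s > 0. There exists a universal constant C₃ > 0 such that the following holds: for any T > 0, any κ with 0 < κ ≤ 0.9, and any times 0 ≤ t_n < t_{n+1} with t_n < T and t_{n+1} − t_n ≤ κ · min{1, T − t_n}, one has η_{T−t} / η_{T−t_n} ≤ C₃ for every t ∈ [t_n, t_{n+1}). -/

import Mathlib

open MeasureTheory ProbabilityTheory Real Set
open scoped ENNReal NNReal RealInnerProductSpace

noncomputable section

namespace DDPMPaper

abbrev E (d : ℕ) := EuclideanSpace ℝ (Fin d)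

/-- The standard Gaussian measure `N(0, I_d)` on `ℝ^d`. -/
def stdGaussian (d : ℕ) : Measure (E d) :=
  (Measure.pi fun _ : Fin d => gaussianReal 0 1).map
    (MeasurableEquiv.toLp 2 (Fin d → ℝ))

instance (d : ℕ) : IsProbabilityMeasure (stdGaussian d) := by
  unfold stdGaussian
  exact Measure.isProbabilityMeasure_map (MeasurableEquiv.measurable _).aemeasurable

/-- `σ_t = √(1 - e^{-2t})`. -/
def sigmaOU (t : ℝ) : ℝ := Real.sqrt (1 - Real.exp (-2 * t))

variable {d : ℕ}

/-- Joint law of `(X₀, W)`. -/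
def forwardPair (pdata : Measure (E d)) : Measure (E d × E d) :=
  pdata.prod (stdGaussian d)

/-- The forward OU process at time `t`, as a function of `(X₀, W)`. -/
def fwd (d : ℕ) (t : ℝ) : E d × E d → E d :=
  fun ω => Real.exp (-t) • ω.1 + sigmaOU t • ω.2

/-- `q_t`, the law of `X_t`. -/
def qLaw (pdata : Measure (E d)) (t : ℝ) : Measure (E d) :=
  (forwardPair pdata).map (fwd d t)

/-- The density of `q_t` with respect to Lebesgue measure. -/
def qDensity (pdata : Measure (E d)) (t : ℝ) (x : E d) : ℝ :=
  ((qLaw pdata t).rnDeriv volume x).toReal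

/-- The score function `s_t(x) = ∇ log q_t(x)`. -/
def scoreFn (pdata : Measure (E d)) (t : ℝ) : E d → E d :=
  fun x => gradient (fun y => Real.log (qDensity pdata t y)) x

instance (pdata : Measure (E d)) [IsFiniteMeasure pdata] :
    IsFiniteMeasure (forwardPair pdata) := by
  unfold forwardPair; infer_instance

/-- The regular conditional distribution of `X₀` given `X_t = x`. -/
def posterior (pdata : Measure (E d)) [IsFiniteMeasure pdata] (t : ℝ) (x : E d) :
    Measure (E d) :=
  condDistrib Prod.fst (fwd d t) (forwardPair pdata) x

/-- Posterior mean `μ_t(x) = E[X₀ | X_t = x]`. -/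
def postMean (pdata : Measure (E d)) [IsFiniteMeasure pdata] (t : ℝ) (x : E d) : E d :=
  ∫ y, y ∂(posterior pdata t x)

/-- Covariance matrix of a measure on `ℝ^d`. -/
def covMatrix (ρ : Measure (E d)) : Matrix (Fin d) (Fin d) ℝ :=
  Matrix.of fun i j => ∫ y, (y i - ∫ z, z i ∂ρ) * (y j - ∫ z, z j ∂ρ) ∂ρ

/-- Posterior covariance `Σ_t(x) = Cov[X₀ | X_t = x]`. -/
def postCov (pdata : Measure (E d)) [IsFiniteMeasure pdata] (t : ℝ) (x : E d) :
    Matrix (Fin d) (Fin d) ℝ :=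
  covMatrix (posterior pdata t x)

/-- `E[Tr(Σ_t(X_t))]`. -/
def ETrCov (pdata : Measure (E d)) [IsFiniteMeasure pdata] (t : ℝ) : ℝ :=
  ∫ x, (postCov pdata t x).trace ∂(qLaw pdata t)

/-- Squared Frobenius norm of a matrix. -/
def frobSq (M : Matrix (Fin d) (Fin d) ℝ) : ℝ := ∑ i, ∑ j, (M i j) ^ 2

/-- Kullback–Leibler divergence `∫ log (dμ/dν) dμ`. -/
def KL {α : Type*} [MeasurableSpace α] (μ ν : Measure α) : ℝ :=
  ∫ x, Real.log ((μ.rnDeriv ν) x).toReal ∂μ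

/-- Euclidean covering number of `M` at scale `ε`. -/
def coveringNumber {X : Type*} [PseudoMetricSpace X] (M : Set X) (ε : ℝ) : ℕ :=
  sInf {s : ℕ | ∃ f : Fin s → X, M ⊆ ⋃ i, Metric.closedBall (f i) ε}

/-- Support of a measure on a topological space. -/
def msupport {X : Type*} [TopologicalSpace X] [MeasurableSpace X] (μ : Measure X) : Set X :=
  {x | ∀ U ∈ nhds x, μ U ≠ 0}

/-- Assumption 1: intrinsic dimension `k` via metric entropy at scale `ε₀ = k^{-C₀}`. -/
def Assumption1 (pdata : Measure (E d)) (k : ℕ) (C₀ Ccover : ℝ) : Prop :=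
  Real.log (coveringNumber (msupport pdata) ((k : ℝ) ^ (-C₀))) ≤
    Ccover * k * Real.log (1 / (k : ℝ) ^ (-C₀))

/-- Assumption 2: bounded support, `‖x‖ ≤ k^{C_R}` on the support. -/
def Assumption2 (pdata : Measure (E d)) (k : ℕ) (CR : ℝ) : Prop :=
  ∀ x ∈ msupport pdata, ‖x‖ ≤ (k : ℝ) ^ CR

/-- The DDPM Markov chain law: `Y₀ ~ N(0, I_d)`,
`Y_{n+1} = g n (Y_n) + c n • Z_n` with `Z_n ~ N(0,I_d)` independent. -/
def ddpmLaw (d : ℕ) (g : ℕ → E d → E d) (c : ℕ → ℝ) : ℕ → Measure (E d)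
  | 0 => stdGaussian d
  | n + 1 => ((ddpmLaw d g c n).prod (stdGaussian d)).map fun p => g n p.1 + c n • p.2

/-- Law of `Y_{t_N}` for the DDPM sampler with schedule `tsch`, horizon `T`
and score estimates `shat`. -/
def ddpmOutput (d : ℕ) (tsch : ℕ → ℝ) (T : ℝ) (shat : ℕ → E d → E d) (N : ℕ) :
    Measure (E d) :=
  ddpmLaw d
    (fun n y => Real.exp (tsch (n + 1) - tsch n) •
      (y + (1 - Real.exp (-2 * (tsch (n + 1) - tsch n))) • shat n y))
    (fun n => Real.sqrt ((1 - Real.exp (-2 * (tsch (n + 1) - tsch n))) *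
      (1 - Real.exp (-2 * (T - tsch (n + 1)))) / (1 - Real.exp (-2 * (T - tsch n)))))
    N


/-- `η_s = e^{-s} / (1 - e^{-2s})`. -/
def etaOU (s : ℝ) : ℝ := Real.exp (-s) / (1 - Real.exp (-2 * s))

/-! Writing `s = T - t ≤ s₀ = T - tₙ`, the step condition gives `s₀ - s ≤ 0.9` and `s ≥ s₀ / 10`.
The ratio `η_s / η_{s₀}` is `e^{s₀ - s}` times `(1 - e^{-2s₀}) / (1 - e^{-2s})`, and the concavity of
`x ↦ 1 - e^{-x}`, which vanishes at `0`, bounds the latter by `s₀ / s`. Hence the ratio is at most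
`10 e^{0.9} ≤ 30`. -/

theorem mul_one_sub_exp_neg_le (x : ℝ) {l : ℝ} (hl₀ : 0 ≤ l) (hl₁ : l ≤ 1) :
    l * (1 - exp (-x)) ≤ 1 - exp (-(l * x)) := by
  have h := convexOn_exp.2 (mem_univ (-x)) (mem_univ 0) hl₀ (sub_nonneg.2 hl₁) (by ring)
  simp only [smul_eq_mul, mul_zero, add_zero, exp_zero, mul_neg] at h
  linarith

theorem etaOU_div_etaOU_le {s s₀ : ℝ} (hs : 0 < s) (hss₀ : s ≤ s₀) :
    etaOU s / etaOU s₀ ≤ exp (s₀ - s) * (s₀ / s) := by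
  have hs₀ : 0 < s₀ := hs.trans_le hss₀
  have hA : 0 < 1 - exp (-2 * s) := sub_pos.2 (exp_lt_one_iff.2 (by linarith))
  have hA₀ : 0 < 1 - exp (-2 * s₀) := sub_pos.2 (exp_lt_one_iff.2 (by linarith))
  have hconcave : s / s₀ * (1 - exp (-(2 * s₀))) ≤ 1 - exp (-(s / s₀ * (2 * s₀))) :=
    mul_one_sub_exp_neg_le _ (div_nonneg hs.le hs₀.le) ((div_le_one hs₀).2 hss₀)
  rw [show s / s₀ * (2 * s₀) = 2 * s by field_simp, ← neg_mul, ← neg_mul] at hconcave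
  have hfactor : (1 - exp (-2 * s₀)) / (1 - exp (-2 * s)) ≤ s₀ / s := by
    rw [div_le_div_iff₀ hA hs]
    rw [div_mul_eq_mul_div, div_le_iff₀ hs₀] at hconcave
    linarith
  calc etaOU s / etaOU s₀
      = exp (s₀ - s) * ((1 - exp (-2 * s₀)) / (1 - exp (-2 * s))) := by
        simp only [etaOU, exp_sub, exp_neg]
        field_simp
    _ ≤ exp (s₀ - s) * (s₀ / s) := by gcongr

theorem exp_nine_tenths_lt_three : exp 0.9 < 3 :=
  calc exp 0.9 ≤ exp 1 := exp_le_exp.2 (by norm_num)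
    _ < 3 := exp_one_lt_d9.trans (by norm_num)

/-- Lemma 4: boundedness of the DDPM score weights. -/
theorem eta_ratio_bounded :
    ∃ C₃ : ℝ, 0 < C₃ ∧
    ∀ T κ tn tn1 : ℝ,
      0 < κ → κ ≤ 0.9 →
      0 ≤ tn → tn < tn1 → tn < T →
      tn1 - tn ≤ κ * min 1 (T - tn) →
      ∀ t ∈ Set.Ico tn tn1, etaOU (T - t) / etaOU (T - tn) ≤ C₃ := by
  refine ⟨30, by norm_num, ?_⟩
  rintro T κ tn tn1 - hκ - - hT hstep t ⟨htn, ht⟩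
  have hstep' : tn1 - tn ≤ 0.9 * min 1 (T - tn) :=
    hstep.trans (mul_le_mul_of_nonneg_right hκ (le_min zero_le_one (by linarith)))
  have hs : 0 < T - t := by linarith [min_le_right 1 (T - tn)]
  have hexp : exp ((T - tn) - (T - t)) ≤ 3 :=
    (exp_le_exp.2 (by linarith [min_le_left 1 (T - tn)])).trans exp_nine_tenths_lt_three.le
  have hratio : (T - tn) / (T - t) ≤ 10 := by
    rw [div_le_iff₀ hs]
    linarith [min_le_right 1 (T - tn)]
  calc etaOU (T - t) / etaOU (T - tn)
      ≤ exp ((T - tn) - (T - t)) * ((T - tn) / (T - t)) :=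
        etaOU_div_etaOU_le hs (by linarith)
    _ ≤ 3 * 10 := mul_le_mul hexp hratio (div_nonneg (by linarith) hs.le) (by norm_num)
    _ = 30 := by norm_num


end DDPMPaper
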